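/- arXiv:0709.4297 — 4 statements merged into one kernel-verified Lean document; each statement's English description precedes it below -/
import Mathlib

section
/- Let {J_n}_{n≥0} be a stationary ergodic sequence of positive random variables with E[log J_0] < 0, and define the reflected multiplicative process M_{n+1} = max(M_n J_n, 1), M_0 = 1. Then M_n converges in distribution to an almost surely finite random variable M satisfying M =_d sup_{n ≥ 0} Π_n, where Π_0 = 1 and Π_n = ∏_{i=-n}^{-1} J_i. -/
/-!
Lindley's recursion unrolls along the inverse shift: with the backward products
`Π k = ∏_{i<k} f (T'^[i+1] ·)`, one has `M n = (max_{k ≤ n} Π k) ∘ T^[n]`. As `T` preserves `P`,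
`M n` has the law of the running maximum `max_{k ≤ n} Π k`, which increases to `⨆ k, Π k`.
This supremum is a.s. finite because `log Π k ω` is the Birkhoff sum of `log f`, of negative mean,
along the ergodic map `T'` started at `T' ω`. The set where these Birkhoff sums stay bounded above
is invariant, hence null or conull, and the maximal ergodic lemma rules out the null case.
-/

open MeasureTheory Filter Set Topology Function

section PartialSups

theorem Monotone.partialSups_comp {α β : Type*} [LinearOrder α] [LinearOrder β] {φ : α → β}
    (hφ : Monotone φ) (u : ℕ → α) (n : ℕ) : partialSups (φ ∘ u) n = φ (partialSups u n) := by
  induction n with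
  | zero => simp
  | succ n ih => simp only [partialSups_add_one, ih, comp_apply, hφ.map_max]

variable {Ω β : Type*} [MeasurableSpace Ω]

theorem measurable_partialSups [SemilatticeSup β] [MeasurableSpace β] [MeasurableSup₂ β]
    {u : ℕ → Ω → β} (hu : ∀ n, Measurable (u n)) (n : ℕ) : Measurable (partialSups u n) := by
  induction n with
  | zero => simpa using hu 0
  | succ n ih => simpa only [partialSups_add_one] using ih.sup (hu _)

theorem integrable_partialSups [NormedAddCommGroup β] [Lattice β] [HasSolidNorm β]
    [IsOrderedAddMonoid β] {μ : Measure Ω} {u : ℕ → Ω → β} (hu : ∀ n, Integrable (u n) μ)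
    (n : ℕ) : Integrable (partialSups u n) μ := by
  induction n with
  | zero => simpa using hu 0
  | succ n ih => simpa only [partialSups_add_one] using ih.sup (hu _)

end PartialSups

section MaximalErgodic

variable {Ω : Type*} {σ : Ω → Ω} {g : Ω → ℝ}

def birkhoffMax (σ : Ω → Ω) (g : Ω → ℝ) : ℕ → Ω → ℝ := partialSups (birkhoffSum σ g)

theorem birkhoffSum_le_birkhoffMax {n N : ℕ} (h : n ≤ N) (x : Ω) :
    birkhoffSum σ g n x ≤ birkhoffMax σ g N x := by
  rw [birkhoffMax, Pi.partialSups_apply]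
  exact le_partialSups_of_le (birkhoffSum σ g · x) h

theorem birkhoffMax_nonneg (N : ℕ) (x : Ω) : 0 ≤ birkhoffMax σ g N x := by
  simpa using birkhoffSum_le_birkhoffMax (σ := σ) (g := g) N.zero_le x

theorem birkhoffMax_mono {N N' : ℕ} (h : N ≤ N') : birkhoffMax σ g N ≤ birkhoffMax σ g N' :=
  (partialSups _).monotone h

theorem birkhoffMax_le_max_zero_add (N : ℕ) (x : Ω) :
    birkhoffMax σ g N x ≤ max 0 (g x + birkhoffMax σ g N (σ x)) := by
  rw [birkhoffMax, Pi.partialSups_apply]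
  refine partialSups_le _ _ _ fun n hn => ?_
  cases n with
  | zero => simp
  | succ n =>
    rw [birkhoffSum_succ']
    exact le_max_of_le_right (add_le_add le_rfl (birkhoffSum_le_birkhoffMax (by omega) _))

theorem bddAbove_range_birkhoffSum_apply_iff (x : Ω) :
    BddAbove (range fun n => birkhoffSum σ g n (σ x)) ↔
      BddAbove (range fun n => birkhoffSum σ g n x) := by
  simp only [bddAbove_def, forall_mem_range]
  constructor
  · rintro ⟨c, hc⟩
    refine ⟨max 0 (g x + c), fun n => ?_⟩
    cases n with
    | zero => simp
    | succ n => exact birkhoffSum_succ' σ g n x ▸ le_max_of_le_right (by linarith [hc n])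
  · rintro ⟨c, hc⟩
    exact ⟨c - g x, fun n => by linarith [birkhoffSum_succ' σ g n x, hc (n + 1)]⟩

variable [MeasurableSpace Ω] {μ : Measure Ω}

theorem measurable_birkhoffSum (hσ : Measurable σ) (hg : Measurable g) (n : ℕ) :
    Measurable (birkhoffSum σ g n) :=
  Finset.measurable_sum _ fun i _ => hg.comp (hσ.iterate i)

theorem MeasureTheory.MeasurePreserving.integrable_birkhoffSum (hσ : MeasurePreserving σ μ μ)
    (hg : Integrable g μ) (n : ℕ) : Integrable (birkhoffSum σ g n) μ :=
  integrable_finsetSum _ fun i _ => (hσ.iterate i).integrable_comp_of_integrable hg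

/-- The maximal ergodic lemma. -/
theorem MeasureTheory.MeasurePreserving.setIntegral_birkhoffMax_pos_nonneg
    (hσ : MeasurePreserving σ μ μ) (hgm : Measurable g) (hgi : Integrable g μ) (N : ℕ) :
    0 ≤ ∫ x in {x | 0 < birkhoffMax σ g N x}, g x ∂μ := by
  set U := birkhoffMax σ g N
  set A := {x | 0 < U x}
  have hUm : Measurable U := measurable_partialSups (measurable_birkhoffSum hσ.measurable hgm) N
  have hUi : Integrable U μ := integrable_partialSups (hσ.integrable_birkhoffSum hgi) N
  have hUσi : Integrable (U ∘ σ) μ := hσ.integrable_comp_of_integrable hUi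
  have hA : MeasurableSet A := measurableSet_lt measurable_const hUm
  have hUσ : ∫ x, U (σ x) ∂μ = ∫ x, U x ∂μ := by
    rw [← integral_map hσ.measurable.aemeasurable (hσ.map_eq ▸ hUm.aestronglyMeasurable),
      hσ.map_eq]
  calc 0 = ∫ x, U x ∂μ - ∫ x, U (σ x) ∂μ := by rw [hUσ, sub_self]
    _ ≤ ∫ x in A, U x ∂μ - ∫ x in A, U (σ x) ∂μ := by
      rw [← setIntegral_eq_integral_of_forall_compl_eq_zero (s := A) fun x hx =>
        le_antisymm (not_lt.1 hx) (birkhoffMax_nonneg N x)]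
      exact sub_le_sub_left (setIntegral_le_integral hUσi
        (ae_of_all _ fun x => birkhoffMax_nonneg N (σ x))) _
    _ = ∫ x in A, (U x - U (σ x)) ∂μ := (integral_sub hUi.integrableOn hUσi.integrableOn).symm
    _ ≤ ∫ x in A, g x ∂μ := by
      refine setIntegral_mono_on (hUi.sub hUσi).integrableOn hgi.integrableOn hA fun x hx => ?_
      have := (le_max_iff.1 (birkhoffMax_le_max_zero_add N x)).resolve_left (not_le.2 hx)
      linarith

theorem Ergodic.ae_bddAbove_birkhoffSum (hσ : Ergodic σ μ) (hgm : Measurable g)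
    (hgi : Integrable g μ) (hneg : ∫ x, g x ∂μ < 0) :
    ∀ᵐ x ∂μ, BddAbove (range fun n => birkhoffSum σ g n x) := by
  set B := {x | BddAbove (range fun n => birkhoffSum σ g n x)}
  have hB : MeasurableSet B :=
    measurableSet_bddAbove_range (measurable_birkhoffSum hσ.measurable hgm)
  rcases hσ.measure_self_or_compl_eq_zero hB (Set.ext bddAbove_range_birkhoffSum_apply_iff)
    with hB0 | hBc0
  · set A := fun N => {x | 0 < birkhoffMax σ g N x}
    have hAm : ∀ N, MeasurableSet (A N) := fun N => measurableSet_lt measurable_const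
      (measurable_partialSups (measurable_birkhoffSum hσ.measurable hgm) N)
    have hAc : (⋃ N, A N)ᶜ ⊆ B := fun x hx => ⟨0, forall_mem_range.2 fun n =>
      (birkhoffSum_le_birkhoffMax le_rfl x).trans (not_lt.1 fun h => hx (mem_iUnion_of_mem n h))⟩
    have hlim := tendsto_setIntegral_of_monotone hAm
      (fun N N' h x hx => hx.trans_le (birkhoffMax_mono h x)) hgi.integrableOn
    have hpos := ge_of_tendsto' hlim
      (hσ.toMeasurePreserving.setIntegral_birkhoffMax_pos_nonneg hgm hgi)
    have hAae : ∀ᵐ x ∂μ, x ∈ ⋃ N, A N := measure_mono_null hAc hB0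
    rw [setIntegral_eq_integral_of_ae_compl_eq_zero (hAae.mono fun x hx hx' => (hx' hx).elim)]
      at hpos
    linarith
  · exact ae_iff.2 hBc0

end MaximalErgodic

section Lindley

variable {Ω : Type*} {σ τ : Ω → Ω} {f : Ω → ℝ}

theorem prod_range_succ_iterate_succ {M : Type*} [CommMonoid M] (σ : Ω → Ω) (f : Ω → M)
    (k : ℕ) (ω : Ω) :
    ∏ i ∈ Finset.range (k + 1), f (σ^[i + 1] ω) =
      (∏ i ∈ Finset.range k, f (σ^[i + 1] (σ ω))) * f (σ ω) := by
  simp only [Finset.prod_range_succ', iterate_succ_apply, iterate_zero_apply]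

theorem prod_range_iterate_succ_eq_exp_birkhoffSum (hf : ∀ ω, 0 < f ω) (k : ℕ) (ω : Ω) :
    ∏ i ∈ Finset.range k, f (σ^[i + 1] ω) = Real.exp (birkhoffSum σ (Real.log ∘ f) k (σ ω)) := by
  simp only [birkhoffSum, Real.exp_sum, comp_apply, Real.exp_log (hf _), iterate_succ_apply]

theorem partialSups_prod_iterate_apply_of_leftInverse (h : LeftInverse σ τ)
    (hf : ∀ ω, 0 ≤ f ω) (n : ℕ) (ω : Ω) :
    partialSups (fun k => ∏ i ∈ Finset.range k, f (σ^[i + 1] (τ ω))) (n + 1) =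
      max (partialSups (fun k => ∏ i ∈ Finset.range k, f (σ^[i + 1] ω)) n * f ω) 1 := by
  rw [partialSups_add_one', sup_comm]
  simp only [Nat.bot_eq_zero, Finset.prod_range_zero, comp_def, prod_range_succ_iterate_succ,
    h ω]
  exact congrArg (max · 1) ((monotone_mul_right_of_nonneg (hf ω)).partialSups_comp _ n)

theorem eq_partialSups_prod_iterate_of_leftInverse
    (h : LeftInverse σ τ) (hf : ∀ ω, 0 ≤ f ω) {M : ℕ → Ω → ℝ} (hM0 : ∀ ω, M 0 ω = 1)
    (hMrec : ∀ n ω, M (n + 1) ω = max (M n ω * f (τ^[n] ω)) 1) (n : ℕ) (ω : Ω) :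
    M n ω = partialSups (fun k => ∏ i ∈ Finset.range k, f (σ^[i + 1] (τ^[n] ω))) n := by
  induction n with
  | zero => simp [hM0]
  | succ n ih =>
    rw [hMrec, ih, iterate_succ_apply', partialSups_prod_iterate_apply_of_leftInverse h hf]

end Lindley

section Distribution

variable {Ω : Type*} [MeasurableSpace Ω] {μ : Measure Ω}

theorem Ergodic.of_leftInverse {T T' : Ω → Ω}
    (hT : Ergodic T μ) (hT' : MeasurePreserving T' μ μ) (h : LeftInverse T' T) :
    Ergodic T' μ where
  toMeasurePreserving := hT'
  aeconst_set s hs hs' := hT.aeconst_set hs <| by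
    nth_rw 1 [← hs']
    rw [← preimage_comp, h.comp_eq_id, preimage_id]

theorem tendsto_measure_lt_partialSups {u : ℕ → Ω → ℝ}
    (hu : ∀ᵐ ω ∂μ, BddAbove (range fun n => u n ω)) (x : ℝ) :
    Tendsto (fun n => μ {ω | x < partialSups u n ω}) atTop (𝓝 (μ {ω | x < ⨆ n, u n ω})) := by
  have hmono : Monotone fun n => {ω | x < partialSups u n ω} :=
    fun m n hmn ω hω => hω.trans_le ((partialSups u).monotone hmn ω)
  have hunion : ⋃ n, {ω | x < partialSups u n ω} =ᵐ[μ] {ω | x < ⨆ n, u n ω} := by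
    rw [eventuallyEq_set]
    filter_upwards [hu] with ω hω
    rw [mem_iUnion]
    change (∃ n, x < partialSups u n ω) ↔ _
    simp only [Pi.partialSups_apply, ← ciSup_partialSups_eq hω,
      lt_ciSup_iff (bddAbove_range_partialSups.2 hω)]
  exact measure_congr hunion ▸ tendsto_measure_iUnion_atTop hmono

end Distribution

theorem stmt12_general {Ω : Type*} [MeasurableSpace Ω] (P : Measure Ω)
    (T T' : Ω → Ω) (hT : Ergodic T P) (hT' : MeasurePreserving T' P P)
    (hTT' : Function.LeftInverse T' T)
    (f : Ω → ℝ) (hf : ∀ ω, 0 < f ω) (hfm : Measurable f)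
    (hint : Integrable (fun ω => Real.log (f ω)) P)
    (hneg : ∫ ω, Real.log (f ω) ∂P < 0)
    (M : ℕ → Ω → ℝ) (hM0 : ∀ ω, M 0 ω = 1)
    (hMrec : ∀ (n : ℕ) ω, M (n + 1) ω = max (M n ω * f (T^[n] ω)) 1)
    (Pn : ℕ → Ω → ℝ) (hPn : ∀ (n : ℕ) ω, Pn n ω = ∏ i ∈ Finset.range n, f (T'^[i + 1] ω)) :
    (∀ᵐ ω ∂P, BddAbove (Set.range fun n => Pn n ω)) ∧
    ∀ x : ℝ, Filter.Tendsto (fun n => P {ω | x < M n ω}) Filter.atTop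
      (nhds (P {ω | x < ⨆ n, Pn n ω})) := by
  have hbdd : ∀ᵐ ω ∂P, BddAbove (range fun n => Pn n ω) := by
    have hsums := (hT.of_leftInverse hT' hTT').ae_bddAbove_birkhoffSum
      (Real.measurable_log.comp hfm) hint hneg
    filter_upwards [hT'.quasiMeasurePreserving.ae hsums] with ω ⟨c, hc⟩
    refine ⟨Real.exp c, forall_mem_range.2 fun n => ?_⟩
    rw [hPn, prod_range_iterate_succ_eq_exp_birkhoffSum hf]
    exact Real.exp_le_exp.2 (hc (mem_range_self n))
  refine ⟨hbdd, fun x => ?_⟩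
  have hPnm : ∀ n, Measurable (Pn n) := fun n => by
    simp only [funext (hPn n)]
    exact Finset.measurable_prod _ fun i _ => hfm.comp (hT'.measurable.iterate _)
  have hM : ∀ n, P {ω | x < M n ω} = P {ω | x < partialSups Pn n ω} := fun n => by
    simp only [eq_partialSups_prod_iterate_of_leftInverse hTT' (fun ω => (hf ω).le) hM0 hMrec,
      ← hPn, ← Pi.partialSups_apply]
    exact (hT.toMeasurePreserving.iterate n).measure_preimage
      (measurableSet_lt measurable_const (measurable_partialSups hPnm n)).nullMeasurableSet
  simpa only [hM] using tendsto_measure_lt_partialSups hbdd x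

theorem stmt12 {Ω : Type*} [MeasurableSpace Ω] (P : Measure Ω) [IsProbabilityMeasure P]
    (T T' : Ω → Ω) (hT : Ergodic T P) (hT' : MeasurePreserving T' P P)
    (hTT' : Function.LeftInverse T' T) (hT'T : Function.RightInverse T' T)
    (f : Ω → ℝ) (hf : ∀ ω, 0 < f ω) (hfm : Measurable f)
    (hint : Integrable (fun ω => Real.log (f ω)) P)
    (hneg : ∫ ω, Real.log (f ω) ∂P < 0)
    (M : ℕ → Ω → ℝ) (hM0 : ∀ ω, M 0 ω = 1)
    (hMrec : ∀ (n : ℕ) ω, M (n + 1) ω = max (M n ω * f (T^[n] ω)) 1)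
    (Pn : ℕ → Ω → ℝ) (hPn : ∀ (n : ℕ) ω, Pn n ω = ∏ i ∈ Finset.range n, f (T'^[i + 1] ω)) :
    (∀ᵐ ω ∂P, BddAbove (Set.range fun n => Pn n ω)) ∧
    ∀ x : ℝ, Filter.Tendsto (fun n => P {ω | x < M n ω}) Filter.atTop
      (nhds (P {ω | x < ⨆ n, Pn n ω})) :=
  stmt12_general P T T' hT hT' hTT' f hf hfm hint hneg M hM0 hMrec Pn hPn
end

section
/- Let Q be the Perron–Frobenius setup for the 2×2 matrix Q_α = [[(1−p)u^α, p d^α],[q u^α, (1−q) d^α]] with u = 1/d > 1 and p > q, p, q ∈ (0,1). Then the value α* = (log(1−q) − log(1−p)) / log u satisfies that the Perron–Frobenius (largest) eigenvalue of Q_{α*} equals 1. -/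
theorem stmt15 (p q u d : ℝ) (hu : 1 < u) (hq : 0 < q) (hpq : q < p) (hp : p < 1)
    (hd : d = 1 / u)
    (αstar : ℝ) (hα : αstar = (Real.log (1 - q) - Real.log (1 - p)) / Real.log u)
    (Qα : Matrix (Fin 2) (Fin 2) ℝ)
    (hQα : Qα = !![(1 - p) * u ^ αstar, p * d ^ αstar;
                   q * u ^ αstar, (1 - q) * d ^ αstar]) :
    (∃ v : Fin 2 → ℝ, (∀ i, 0 < v i) ∧ Qα.mulVec v = v) ∧
    ∀ μ : ℝ, (∃ w : Fin 2 → ℝ, w ≠ 0 ∧ Qα.mulVec w = μ • w) → μ ≤ 1 := by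
  have hu0 : (0 : ℝ) < u := lt_trans one_pos hu
  have hp0 : 0 < p := lt_trans hq hpq
  have h1p : 0 < 1 - p := by linarith
  have h1q : 0 < 1 - q := by linarith
  have hlogu : Real.log u ≠ 0 := ne_of_gt (Real.log_pos hu)
  have hA : u ^ αstar = (1 - q) / (1 - p) := by
    rw [Real.rpow_def_of_pos hu0, hα]
    rw [mul_div_assoc', mul_comm, mul_div_assoc, div_self hlogu, mul_one]
    rw [Real.exp_sub, Real.exp_log h1q, Real.exp_log h1p]
  have hB : d ^ αstar = (1 - p) / (1 - q) := by
    rw [hd, one_div, Real.inv_rpow hu0.le, hA, inv_div]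
  have hQ : Qα = !![1 - q, p * (1 - p) / (1 - q); q * (1 - q) / (1 - p), 1 - p] := by
    rw [hQα, hA, hB]
    congr 1 <;> field_simp
  constructor
  · refine ⟨![p * (1 - p), q * (1 - q)], ?_, ?_⟩
    · intro i
      fin_cases i <;> simp <;> positivity
    · rw [hQ]
      funext i
      fin_cases i <;>
        simp [Matrix.mulVec, dotProduct, Fin.sum_univ_two] <;>
        field_simp <;> ring
  · rintro μ ⟨w, hw, hmw⟩
    have hker : ∃ v, v ≠ 0 ∧ (Qα - μ • (1 : Matrix (Fin 2) (Fin 2) ℝ)).mulVec v = 0 := by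
      refine ⟨w, hw, ?_⟩
      rw [Matrix.sub_mulVec, Matrix.smul_mulVec, Matrix.one_mulVec, hmw, sub_self]
    have hdet : (Qα - μ • (1 : Matrix (Fin 2) (Fin 2) ℝ)).det = 0 := by
      rw [← Matrix.exists_mulVec_eq_zero_iff]
      exact hker
    rw [hQ] at hdet
    have hd2 : (1 - q - μ) * (1 - p - μ) - (p * (1 - p) / (1 - q)) * (q * (1 - q) / (1 - p)) = 0 := by
      have := hdet
      rw [Matrix.det_fin_two] at this
      simpa [Matrix.smul_apply, Matrix.one_apply] using this
    have hd3 : (1 - q - μ) * (1 - p - μ) - p * q = 0 := by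
      have hpq' : p * (1 - p) / (1 - q) * (q * (1 - q) / (1 - p)) = p * q := by
        field_simp
      rw [hpq'] at hd2
      exact hd2
    have : (μ - 1) * (μ - (1 - p - q)) = 0 := by nlinarith [hd3]
    rcases mul_eq_zero.mp this with h | h
    · linarith
    · nlinarith
end

section
/- (Lemma 6 of the paper, pathwise subadditivity of reflected branching in the initial value.) Let y₁, y₂ be positive integers and suppose Λ_n^{y₁} and Λ_n^{y₂} are reflected branching processes Λ_{n+1}^{y} = max(Σ_{i=1}^{Λ_n^y} B_n^{i}(J_n), y) driven by the same modulating sequence {J_n} but conditionally independent increment families, with barriers y₁ and y₂ respectively. Then Λ_n^{y₁ + y₂} is stochastically dominated by Λ_n^{y₁} + Λ_n^{y₂}: P[Λ_n^{y₁+y₂} > x] ≤ P[Λ_n^{y₁} + Λ_n^{y₂} > x] for all x and n. -/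
/-!
Induction on `n`. Conditionally on the past, the next value of a reflected process whose current
value is `k` is `max (S_k) y`, where `S_k` is a sum of `k` fresh i.i.d. `ν n` variables; hence
`P[x < Λ^{y₁+y₂}_{n+1}] = E[t (Λ^{y₁+y₂}_n)]` with `t k = P[x < max S_k (y₁ + y₂)]`, which is
nondecreasing in `k`. For the two independent processes, the combined offspring count is `S_k` with
`k = Λ^{y₁}_n + Λ^{y₂}_n`, and `max (a + b) (y₁ + y₂) ≤ max a y₁ + max b y₂`. Stochastic dominance
at time `n` compares the two expectations of the nondecreasing function `t`.
-/

open MeasureTheory ProbabilityTheory Finset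
open scoped ENNReal

section

variable {Ω : Type*}

theorem Monotone.eq_add_tsum_ite {t : ℕ → ℝ≥0∞} (ht : Monotone t) (k : ℕ) :
    t k = t 0 + ∑' j, if j < k then t (j + 1) - t j else 0 := by
  rw [tsum_eq_sum (s := range k) fun j hj => if_neg (by simpa using hj),
    sum_congr rfl fun j hj => if_pos (mem_range.1 hj)]
  induction k with
  | zero => simp
  | succ k ih => rw [sum_range_succ, ← add_assoc, ← ih, add_tsub_cancel_of_le (ht k.le_succ)]

theorem lintegral_comp_eq_add_tsum [MeasurableSpace Ω] (μ : Measure Ω) {U : Ω → ℕ}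
    (hU : Measurable U) {t : ℕ → ℝ≥0∞} (ht : Monotone t) :
    ∫⁻ ω, t (U ω) ∂μ = t 0 * μ Set.univ + ∑' j, (t (j + 1) - t j) * μ {ω | j < U ω} := by
  have hset : ∀ j, MeasurableSet {ω | j < U ω} := fun j => measurableSet_lt measurable_const hU
  have hind : ∀ j, Measurable fun ω => if j < U ω then t (j + 1) - t j else 0 :=
    fun j => measurable_const.ite (hset j) measurable_const
  simp_rw [ht.eq_add_tsum_ite (U _)]
  rw [lintegral_add_left measurable_const, lintegral_const,
    lintegral_tsum fun j => (hind j).aemeasurable]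
  congr 1
  refine tsum_congr fun j => ?_
  rw [← lintegral_indicator_const (hset j)]
  simp only [Set.indicator_apply, Set.mem_ofPred_eq]

theorem lintegral_comp_le_of_measure_lt_le [MeasurableSpace Ω] {μ : Measure Ω} {U V : Ω → ℕ}
    (hU : Measurable U) (hV : Measurable V) {t : ℕ → ℝ≥0∞} (ht : Monotone t)
    (h : ∀ x, μ {ω | x < U ω} ≤ μ {ω | x < V ω}) :
    ∫⁻ ω, t (U ω) ∂μ ≤ ∫⁻ ω, t (V ω) ∂μ := by
  rw [lintegral_comp_eq_add_tsum μ hU ht, lintegral_comp_eq_add_tsum μ hV ht]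
  exact add_le_add le_rfl (ENNReal.tsum_le_tsum fun j => mul_le_mul_right (h j) _)

theorem ProbabilityTheory.Indep.measure_setOf_comp_mem_eq_lintegral [mΩ : MeasurableSpace Ω]
    {P : Measure Ω} {mF mG : MeasurableSpace Ω} (hind : Indep mF mG P) (hF : mF ≤ mΩ)
    (hG : mG ≤ mΩ) {κ β : Type*} [Countable κ] [MeasurableSpace κ] [MeasurableSingletonClass κ]
    [MeasurableSpace β] {N : Ω → κ} (hN : Measurable[mF] N) {S : κ → Ω → β}
    (hS : ∀ k, Measurable[mG] (S k)) {A : Set β} (hA : MeasurableSet A) :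
    P {ω | S (N ω) ω ∈ A} = ∫⁻ ω, P (S (N ω) ⁻¹' A) ∂P := by
  have hNk : ∀ k, MeasurableSet[mF] (N ⁻¹' {k}) := fun k => hN (measurableSet_singleton k)
  have hSk : ∀ k, MeasurableSet[mG] (S k ⁻¹' A) := fun k => hS k hA
  have hunion : {ω | S (N ω) ω ∈ A} = ⋃ k, N ⁻¹' {k} ∩ S k ⁻¹' A := by
    ext ω
    simp
  have hdisj : Pairwise (Function.onFun Disjoint fun k => N ⁻¹' {k} ∩ S k ⁻¹' A) :=
    fun k l hkl => Disjoint.mono Set.inter_subset_left Set.inter_subset_left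
      ((Set.disjoint_singleton.2 hkl).preimage N)
  rw [hunion, measure_iUnion hdisj fun k => (hF _ (hNk k)).inter (hG _ (hSk k))]
  rw [← @lintegral_map Ω κ mΩ _ P (fun k => P (S k ⁻¹' A)) N (measurable_of_countable _)
    (hN.mono hF le_rfl), lintegral_countable']
  refine tsum_congr fun k => ?_
  rw [(Indep_iff _ _ P).1 hind _ _ (hNk k) (hSk k), mul_comm,
    Measure.map_apply (hN.mono hF le_rfl) (measurableSet_singleton k)]

section Convolution

variable {M : Type*} [AddCommMonoid M] [MeasurableSpace M] [MeasurableAdd₂ M]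

noncomputable def convPow (ν : Measure M) : ℕ → Measure M
  | 0 => Measure.dirac 0
  | k + 1 => convPow ν k ∗ ν

instance isProbabilityMeasure_convPow (ν : Measure M) [IsProbabilityMeasure ν] (k : ℕ) :
    IsProbabilityMeasure (convPow ν k) := by
  induction k with
  | zero => rw [convPow]; infer_instance
  | succ k ih => rw [convPow]; infer_instance

theorem monotone_convPow_apply [PartialOrder M] [CanonicallyOrderedAdd M] (ν : Measure M)
    [IsProbabilityMeasure ν] {A : Set M} (hA : IsUpperSet A) (hAm : MeasurableSet A) :
    Monotone fun k => convPow ν k A := by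
  refine monotone_nat_of_le_succ fun k => ?_
  calc convPow ν k A = (convPow ν k).prod ν (A ×ˢ Set.univ) := by
        rw [Measure.prod_prod, measure_univ, mul_one]
    _ ≤ (convPow ν k).prod ν ((fun p : M × M => p.1 + p.2) ⁻¹' A) :=
        measure_mono fun p hp => hA le_self_add hp.1
    _ = convPow ν (k + 1) A := by
        rw [convPow, Measure.conv, Measure.map_apply measurable_add hAm]

theorem ProbabilityTheory.iIndepFun.map_sum_eq_convPow [MeasurableSpace Ω] {P : Measure Ω}
    [IsProbabilityMeasure P] {ι : Type*} {X : ι → Ω → M} (hX : iIndepFun X P)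
    (hXm : ∀ i, Measurable (X i)) {ν : Measure M} (hXν : ∀ i, P.map (X i) = ν) (s : Finset ι) :
    P.map (∑ i ∈ s, X i) = convPow ν #s := by
  classical
  induction s using Finset.induction_on with
  | empty => simp [convPow, Pi.zero_def, Measure.map_const]
  | insert a s ha ih =>
    rw [sum_insert ha, card_insert_of_notMem ha, add_comm, convPow,
      (hX.indepFun_finsetSum_of_notMem hXm ha).map_add_eq_map_conv_map
        (by fun_prop) (hXm a), ih, hXν]

end Convolution

section Times

variable {κ β : Type*} [MeasurableSpace β]

abbrev sigmaAtTimes (X : ℕ × κ → Ω → β) (T : Set ℕ) : MeasurableSpace Ω :=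
  ⨆ p ∈ {p : ℕ × κ | p.1 ∈ T}, MeasurableSpace.comap (X p) inferInstance

variable {X : ℕ × κ → Ω → β}

theorem measurable_sigmaAtTimes {T : Set ℕ} {p : ℕ × κ} (hp : p.1 ∈ T) :
    Measurable[sigmaAtTimes X T] (X p) :=
  (comap_measurable (X p)).mono
    (le_biSup (fun p : ℕ × κ => MeasurableSpace.comap (X p) inferInstance) hp) le_rfl

theorem monotone_sigmaAtTimes_Iio : Monotone fun n => sigmaAtTimes (Ω := Ω) X (Set.Iio n) :=
  fun _ _ h => biSup_mono fun _ hp => Set.Iio_subset_Iio h hp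

theorem sigmaAtTimes_le [mΩ : MeasurableSpace Ω] (hX : ∀ p, Measurable (X p)) (T : Set ℕ) :
    sigmaAtTimes X T ≤ mΩ :=
  iSup₂_le fun p _ => (hX p).comap_le

theorem ProbabilityTheory.iIndepFun.indep_sigmaAtTimes [MeasurableSpace Ω] {P : Measure Ω}
    (hX : iIndepFun X P) (hXm : ∀ p, Measurable (X p)) {T T' : Set ℕ} (hT : Disjoint T T') :
    Indep (sigmaAtTimes X T) (sigmaAtTimes X T') P :=
  indep_iSup_of_disjoint (fun p => (hXm p).comap_le) hX.iIndep
    (Set.disjoint_left.2 fun _ hp hp' => Set.disjoint_left.1 hT hp hp')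

end Times

theorem measurable_sum_range_comp {m : MeasurableSpace Ω} {M : Type*} [AddCommMonoid M]
    [MeasurableSpace M] [MeasurableAdd₂ M] {K : Ω → ℕ} (hK : Measurable[m] K)
    {g : ℕ → Ω → M} (hg : ∀ i, Measurable[m] (g i)) :
    Measurable[m] fun ω => ∑ i ∈ range (K ω), g i ω :=
  (measurable_from_prod_countable_left (f := fun q : Ω × ℕ => ∑ i ∈ range q.2, g i q.1)
    fun k => Finset.measurable_sum (range k) fun i _ => hg i).comp (measurable_id.prodMk hK)

theorem measurable_of_reflected_recursion {m : ℕ → MeasurableSpace Ω} (hm : Monotone m)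
    {g : ℕ → ℕ → Ω → ℕ} (hg : ∀ n i, Measurable[m (n + 1)] (g n i)) {Λ : ℕ → Ω → ℕ} {y : ℕ}
    (h0 : ∀ ω, Λ 0 ω = y)
    (hrec : ∀ n ω, Λ (n + 1) ω = max (∑ i ∈ range (Λ n ω), g n i ω) y) (n : ℕ) :
    Measurable[m n] (Λ n) := by
  induction n with
  | zero => rw [funext h0]; exact measurable_const
  | succ n ih =>
    rw [funext (hrec n)]
    exact (measurable_sum_range_comp (ih.mono (hm n.le_succ) le_rfl) (hg n)).max
      measurable_const

theorem ProbabilityTheory.iIndepFun.measure_sum_mem_eq_lintegral_convPow [MeasurableSpace Ω]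
    {P : Measure Ω} [IsProbabilityMeasure P] {M : Type*} [AddCommMonoid M] [MeasurableSpace M]
    [MeasurableAdd₂ M] {κ κ' : Type*} [Countable κ'] [MeasurableSpace κ']
    [MeasurableSingletonClass κ'] {X : ℕ × κ → Ω → M} (hX : iIndepFun X P)
    (hXm : ∀ p, Measurable (X p)) {ν : ℕ → Measure M} (hXν : ∀ p, P.map (X p) = ν p.1)
    {n : ℕ} {N : Ω → κ'} (hN : Measurable[sigmaAtTimes X (Set.Iio n)] N) (s : κ' → Finset κ)
    {A : Set M} (hA : MeasurableSet A) :
    P {ω | ∑ j ∈ s (N ω), X (n, j) ω ∈ A} = ∫⁻ ω, convPow (ν n) #(s (N ω)) A ∂P := by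
  have hind := hX.indep_sigmaAtTimes hXm
    (Set.disjoint_singleton_right.2 (lt_irrefl n) : Disjoint (Set.Iio n) {n})
  have hS : ∀ k, Measurable[sigmaAtTimes X {n}] fun ω => ∑ j ∈ s k, X (n, j) ω :=
    fun k => Finset.measurable_sum _ fun j _ => measurable_sigmaAtTimes rfl
  rw [hind.measure_setOf_comp_mem_eq_lintegral (sigmaAtTimes_le hXm _) (sigmaAtTimes_le hXm _)
    hN hS hA]
  refine lintegral_congr fun ω => ?_
  have hlaw := (hX.precomp (Prod.mk_right_injective n)).map_sum_eq_convPow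
    (fun j => hXm (n, j)) (ν := ν n) (fun j => hXν (n, j)) (s (N ω))
  rw [← hlaw, Measure.map_apply (by fun_prop) hA, Finset.sum_fn]

section Reflected

variable [MeasurableSpace Ω] {P : Measure Ω} [IsProbabilityMeasure P] {ν : ℕ → Measure ℕ}

theorem measure_reflected_succ_mem_eq_lintegral {X : ℕ × ℕ → Ω → ℕ} (hX : iIndepFun X P)
    (hXm : ∀ p, Measurable (X p)) (hXν : ∀ p, P.map (X p) = ν p.1) {Λ : ℕ → Ω → ℕ} {y : ℕ}
    (h0 : ∀ ω, Λ 0 ω = y)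
    (hrec : ∀ n ω, Λ (n + 1) ω = max (∑ i ∈ range (Λ n ω), X (n, i) ω) y) (n : ℕ)
    (A : Set ℕ) :
    P {ω | Λ (n + 1) ω ∈ A} = ∫⁻ ω, convPow (ν n) (Λ n ω) {s | max s y ∈ A} ∂P := by
  have hΛ : Measurable[sigmaAtTimes X (Set.Iio n)] (Λ n) :=
    measurable_of_reflected_recursion monotone_sigmaAtTimes_Iio
      (fun n i => measurable_sigmaAtTimes (p := (n, i)) n.lt_succ_self) h0 hrec n
  simp_rw [hrec n]
  simpa using hX.measure_sum_mem_eq_lintegral_convPow hXm hXν hΛ range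
    (A := {s | max s y ∈ A}) (Set.Countable.measurableSet (Set.to_countable _))

theorem measure_sum_add_sum_mem_eq_lintegral {X : ℕ × (ℕ ⊕ ℕ) → Ω → ℕ} (hX : iIndepFun X P)
    (hXm : ∀ p, Measurable (X p)) (hXν : ∀ p, P.map (X p) = ν p.1) {Λ₁ Λ₂ : ℕ → Ω → ℕ}
    {y₁ y₂ : ℕ} (h₁0 : ∀ ω, Λ₁ 0 ω = y₁) (h₂0 : ∀ ω, Λ₂ 0 ω = y₂)
    (hrec₁ : ∀ n ω, Λ₁ (n + 1) ω = max (∑ i ∈ range (Λ₁ n ω), X (n, .inl i) ω) y₁)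
    (hrec₂ : ∀ n ω, Λ₂ (n + 1) ω = max (∑ i ∈ range (Λ₂ n ω), X (n, .inr i) ω) y₂) (n : ℕ)
    (A : Set ℕ) :
    P {ω | ∑ i ∈ range (Λ₁ n ω), X (n, .inl i) ω + ∑ i ∈ range (Λ₂ n ω), X (n, .inr i) ω ∈ A}
      = ∫⁻ ω, convPow (ν n) (Λ₁ n ω + Λ₂ n ω) A ∂P := by
  have hΛ₁ : Measurable[sigmaAtTimes X (Set.Iio n)] (Λ₁ n) :=
    measurable_of_reflected_recursion monotone_sigmaAtTimes_Iio
      (fun n i => measurable_sigmaAtTimes (p := (n, .inl i)) n.lt_succ_self) h₁0 hrec₁ n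
  have hΛ₂ : Measurable[sigmaAtTimes X (Set.Iio n)] (Λ₂ n) :=
    measurable_of_reflected_recursion monotone_sigmaAtTimes_Iio
      (fun n i => measurable_sigmaAtTimes (p := (n, .inr i)) n.lt_succ_self) h₂0 hrec₂ n
  simpa [sum_disjSum] using hX.measure_sum_mem_eq_lintegral_convPow hXm hXν
    (hΛ₁.prodMk hΛ₂) (fun q => (range q.1).disjSum (range q.2))
    (Set.Countable.measurableSet (Set.to_countable A))

end Reflected

end

-- Indexing the merged family of `B1` and `B2` by `ℕ ⊕ ℕ` makes their joint offspring count a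
-- single sum over a `Finset.disjSum`.
def sumToBool : ℕ ⊕ ℕ → ℕ × Bool := Sum.elim (fun i => (i, true)) (fun i => (i, false))

theorem sumToBool_injective : Function.Injective sumToBool :=
  Function.Injective.sumElim (fun _ _ h => (Prod.ext_iff.1 h).1)
    (fun _ _ h => (Prod.ext_iff.1 h).1)
    fun _ _ h => Bool.noConfusion (Prod.ext_iff.1 h).2

theorem stmt16_general {Ω : Type*} [MeasurableSpace Ω] (P : Measure Ω) [IsProbabilityMeasure P]
    (B B1 B2 : ℕ → ℕ → Ω → ℕ)
    (hBm : ∀ n i, Measurable (B n i)) (hB1m : ∀ n i, Measurable (B1 n i))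
    (hB2m : ∀ n i, Measurable (B2 n i))
    (hBindep : iIndepFun (fun p : ℕ × ℕ => B p.1 p.2) P)
    (hCindep : iIndepFun
      (fun p : ℕ × ℕ × Bool => if p.2.2 then B1 p.1 p.2.1 else B2 p.1 p.2.1) P)
    (ν : ℕ → Measure ℕ)
    (hBd : ∀ n i, Measure.map (B n i) P = ν n)
    (hB1d : ∀ n i, Measure.map (B1 n i) P = ν n)
    (hB2d : ∀ n i, Measure.map (B2 n i) P = ν n)
    (y₁ y₂ : ℕ)
    (Λ12 Λ1 Λ2 : ℕ → Ω → ℕ)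
    (h12 : ∀ ω, Λ12 0 ω = y₁ + y₂) (h1 : ∀ ω, Λ1 0 ω = y₁) (h2 : ∀ ω, Λ2 0 ω = y₂)
    (hrec12 : ∀ (n : ℕ) ω, Λ12 (n + 1) ω
      = max (∑ i ∈ Finset.range (Λ12 n ω), B n i ω) (y₁ + y₂))
    (hrec1 : ∀ (n : ℕ) ω, Λ1 (n + 1) ω = max (∑ i ∈ Finset.range (Λ1 n ω), B1 n i ω) y₁)
    (hrec2 : ∀ (n : ℕ) ω, Λ2 (n + 1) ω = max (∑ i ∈ Finset.range (Λ2 n ω), B2 n i ω) y₂) :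
    ∀ (n x : ℕ), P {ω | x < Λ12 n ω} ≤ P {ω | x < Λ1 n ω + Λ2 n ω} := by
  set C := fun p : ℕ × ℕ × Bool => if p.2.2 then B1 p.1 p.2.1 else B2 p.1 p.2.1
  have hCm : ∀ p, Measurable (C (Prod.map id sumToBool p)) := by
    rintro ⟨n, i | i⟩
    exacts [hB1m n i, hB2m n i]
  have hCν : ∀ p, P.map (C (Prod.map id sumToBool p)) = ν p.1 := by
    rintro ⟨n, i | i⟩
    exacts [hB1d n i, hB2d n i]
  have hΛm : ∀ n, Measurable (Λ12 n) :=
    measurable_of_reflected_recursion (m := fun _ => _) monotone_const hBm h12 hrec12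
  have hΛ₁₂m : ∀ n, Measurable (fun ω => Λ1 n ω + Λ2 n ω) := fun n =>
    (measurable_of_reflected_recursion (m := fun _ => _) monotone_const hB1m h1 hrec1 n).add
      (measurable_of_reflected_recursion (m := fun _ => _) monotone_const hB2m h2 hrec2 n)
  intro n
  induction n with
  | zero => intro x; simp [h12, h1, h2]
  | succ n ih =>
    intro x
    have : IsProbabilityMeasure (ν n) :=
      hBd n 0 ▸ Measure.isProbabilityMeasure_map (hBm n 0).aemeasurable
    set t : ℕ → ℝ≥0∞ := fun k => convPow (ν n) k {s | x < max s (y₁ + y₂)}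
    have ht : Monotone t := monotone_convPow_apply (ν n)
      (fun _ _ hab ha => ha.trans_le (max_le_max_right _ hab)) (Set.to_countable _).measurableSet
    calc P {ω | x < Λ12 (n + 1) ω} = ∫⁻ ω, t (Λ12 n ω) ∂P :=
          measure_reflected_succ_mem_eq_lintegral hBindep (fun p => hBm p.1 p.2)
            (fun p => hBd p.1 p.2) h12 hrec12 n {s | x < s}
      _ ≤ ∫⁻ ω, t (Λ1 n ω + Λ2 n ω) ∂P :=
          lintegral_comp_le_of_measure_lt_le (hΛm n) (hΛ₁₂m n) ht ih
      _ = P {ω | x < max (∑ i ∈ range (Λ1 n ω), B1 n i ω + ∑ i ∈ range (Λ2 n ω), B2 n i ω)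
            (y₁ + y₂)} :=
          (measure_sum_add_sum_mem_eq_lintegral
            (hCindep.precomp (Function.injective_id.prodMap sumToBool_injective)) hCm hCν
            h1 h2 hrec1 hrec2 n {s | x < max s (y₁ + y₂)}).symm
      _ ≤ P {ω | x < Λ1 (n + 1) ω + Λ2 (n + 1) ω} := measure_mono fun ω hω => by
          simp only [Set.mem_ofPred_eq, hrec1, hrec2] at hω ⊢
          omega

theorem stmt16 {Ω : Type*} [MeasurableSpace Ω] (P : Measure Ω) [IsProbabilityMeasure P]
    (B B1 B2 : ℕ → ℕ → Ω → ℕ)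
    (hBm : ∀ n i, Measurable (B n i)) (hB1m : ∀ n i, Measurable (B1 n i))
    (hB2m : ∀ n i, Measurable (B2 n i))
    (hBindep : iIndepFun (fun p : ℕ × ℕ => B p.1 p.2) P)
    (hCindep : iIndepFun
      (fun p : ℕ × ℕ × Bool => if p.2.2 then B1 p.1 p.2.1 else B2 p.1 p.2.1) P)
    (ν : ℕ → Measure ℕ)
    (hBd : ∀ n i, Measure.map (B n i) P = ν n)
    (hB1d : ∀ n i, Measure.map (B1 n i) P = ν n)
    (hB2d : ∀ n i, Measure.map (B2 n i) P = ν n)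
    (y₁ y₂ : ℕ) (hy₁ : 0 < y₁) (hy₂ : 0 < y₂)
    (Λ12 Λ1 Λ2 : ℕ → Ω → ℕ)
    (h12 : ∀ ω, Λ12 0 ω = y₁ + y₂) (h1 : ∀ ω, Λ1 0 ω = y₁) (h2 : ∀ ω, Λ2 0 ω = y₂)
    (hrec12 : ∀ (n : ℕ) ω, Λ12 (n + 1) ω
      = max (∑ i ∈ Finset.range (Λ12 n ω), B n i ω) (y₁ + y₂))
    (hrec1 : ∀ (n : ℕ) ω, Λ1 (n + 1) ω = max (∑ i ∈ Finset.range (Λ1 n ω), B1 n i ω) y₁)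
    (hrec2 : ∀ (n : ℕ) ω, Λ2 (n + 1) ω = max (∑ i ∈ Finset.range (Λ2 n ω), B2 n i ω) y₂) :
    ∀ (n x : ℕ), P {ω | x < Λ12 n ω} ≤ P {ω | x < Λ1 n ω + Λ2 n ω} :=
  stmt16_general P B B1 B2 hBm hB1m hB2m hBindep hCindep ν hBd hB1d hB2d y₁ y₂ Λ12 Λ1 Λ2 h12 h1 h2
    hrec12 hrec1 hrec2
end

section
/- (Corollary 1 of the paper.) With the setting of the reflected branching process and y a positive integer, if {Λ_{n,j}^1}_{1≤j≤y} are conditionally i.i.d. copies of Λ_n^1 given {J_i}_{1≤i≤n}, then Λ_n^y is stochastically dominated by Σ_{j=1}^{y} Λ_{n,j}^1; consequently P[Λ_n^l > x] ≥ P[Λ_n^y > y x] / y for any integers y ≥ 1, l ≥ 1 and real x. -/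
/-!
Run `y` copies of the barrier-1 process on the increments of a single family: in generation `n`,
copy `j` consumes the block of row `n` that follows the blocks of copies `0, …, j - 1`. Pathwise,
`Λ^y` is at most the sum of the copies, and copy `0` is the barrier-1 process, hence at most `Λ^l`.
Each copy has the law of copy `0`: the position and length of its block are determined by earlier
generations, so they are independent of row `n`, and a sum of i.i.d. increments over a block has a
law that does not depend on where the block starts. A union bound over the `y` copies concludes.
-/

open MeasureTheory ProbabilityTheory Finset

def reflected (b : ℕ → ℕ → ℕ) (y : ℕ) : ℕ → ℕ
  | 0 => y
  | n + 1 => max (∑ i ∈ range (reflected b y n), b n i) y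

def blockCopies (b : ℕ → ℕ → ℕ) : ℕ → ℕ → ℕ
  | 0, _ => 1
  | n + 1, j =>
    max (∑ i ∈ range (blockCopies b n j), b n (∑ k ∈ range j, blockCopies b n k + i)) 1

theorem sum_range_sum_eq_sum_blocks {M : Type*} [AddCommMonoid M] (c : ℕ → ℕ) (f : ℕ → M)
    (y : ℕ) :
    ∑ i ∈ range (∑ j ∈ range y, c j), f i
      = ∑ j ∈ range y, ∑ i ∈ range (c j), f (∑ k ∈ range j, c k + i) := by
  induction y with
  | zero => simp
  | succ y ih => rw [sum_range_succ, sum_range_add, ih, sum_range_succ]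

lemma one_le_blockCopies (b : ℕ → ℕ → ℕ) (n j : ℕ) : 1 ≤ blockCopies b n j := by
  cases n with
  | zero => rfl
  | succ n => exact le_max_right _ _

lemma blockCopies_zero_eq_reflected (b : ℕ → ℕ → ℕ) (n : ℕ) :
    blockCopies b n 0 = reflected b 1 n := by
  induction n with
  | zero => rfl
  | succ n ih => simp [blockCopies, reflected, ih]

lemma reflected_mono (b : ℕ → ℕ → ℕ) {y y' : ℕ} (h : y ≤ y') (n : ℕ) :
    reflected b y n ≤ reflected b y' n := by
  induction n with
  | zero => exact h
  | succ n ih => exact max_le_max (sum_le_sum_of_subset (range_subset_range.2 ih)) h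

lemma reflected_le_sum_blockCopies (b : ℕ → ℕ → ℕ) (y n : ℕ) :
    reflected b y n ≤ ∑ j ∈ range y, blockCopies b n j := by
  induction n with
  | zero => simp [reflected, blockCopies]
  | succ n ih =>
    refine max_le ?_ ?_
    · calc ∑ i ∈ range (reflected b y n), b n i
          ≤ ∑ i ∈ range (∑ j ∈ range y, blockCopies b n j), b n i :=
            sum_le_sum_of_subset (range_subset_range.2 ih)
        _ = ∑ j ∈ range y, ∑ i ∈ range (blockCopies b n j),
              b n (∑ k ∈ range j, blockCopies b n k + i) :=
            sum_range_sum_eq_sum_blocks _ _ _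
        _ ≤ ∑ j ∈ range y, blockCopies b (n + 1) j := sum_le_sum fun j _ => le_max_left _ _
    · simpa using card_nsmul_le_sum (range y) _ 1 fun j _ => one_le_blockCopies b (n + 1) j

lemma eq_reflected_of_recursion {Ω : Type*} {Λ : ℕ → Ω → ℕ} {B : ℕ → ℕ → Ω → ℕ} {y : ℕ}
    (h0 : ∀ ω, Λ 0 ω = y)
    (hrec : ∀ n ω, Λ (n + 1) ω = max (∑ i ∈ range (Λ n ω), B n i ω) y) (n : ℕ) (ω : Ω) :
    Λ n ω = reflected (B · · ω) y n := by
  induction n with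
  | zero => exact h0 ω
  | succ n ih => rw [hrec, ih]; rfl

lemma measurable_apply_comp_of_countable {Ω ι β : Type*} {mΩ : MeasurableSpace Ω}
    [MeasurableSpace ι] [Countable ι] [MeasurableSingletonClass ι] [MeasurableSpace β]
    {f : Ω → ι} {h : ι → Ω → β} (hf : Measurable f) (hh : ∀ a, Measurable (h a)) :
    Measurable fun ω => h (f ω) ω :=
  (measurable_from_prod_countable_left (f := fun p : Ω × ι => h p.2 p.1) hh).comp
    (measurable_id.prodMk hf)

lemma measurable_blockCopies {Ω : Type*} {mΩ : MeasurableSpace Ω} {B : ℕ → ℕ → Ω → ℕ} {n : ℕ}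
    (hB : ∀ m < n, ∀ i, Measurable (B m i)) (j : ℕ) :
    Measurable fun ω => blockCopies (B · · ω) n j := by
  induction n generalizing j with
  | zero => exact measurable_const
  | succ n ih =>
    have ih' k := ih (fun m hm => hB m (hm.trans n.lt_succ_self)) k
    have hoffset : Measurable fun ω => ∑ k ∈ range j, blockCopies (B · · ω) n k :=
      Finset.measurable_sum _ fun k _ => ih' k
    exact measurable_apply_comp_of_countable (hoffset.prodMk (ih' j))
      (h := fun p ω => max (∑ i ∈ range p.2, B n (p.1 + i) ω) 1)
      fun p => (Finset.measurable_sum _ fun i _ => hB n n.lt_succ_self _).max measurable_const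

section Probability

variable {Ω : Type*} [MeasurableSpace Ω] {P : Measure Ω}

lemma measure_card_mul_lt_sum_le {ι : Type*} (s : Finset ι) (X : ι → Ω → ℝ) (x : ℝ) :
    P {ω | #s * x < ∑ j ∈ s, X j ω} ≤ ∑ j ∈ s, P {ω | x < X j ω} := by
  calc P {ω | #s * x < ∑ j ∈ s, X j ω} ≤ P (⋃ j ∈ s, {ω | x < X j ω}) := by
        refine measure_mono fun ω hω => ?_
        obtain ⟨j, hj, hlt⟩ := exists_lt_of_sum_lt (f := fun _ => x) (s := s)
          (by simpa [nsmul_eq_mul] using hω)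
        exact Set.mem_biUnion hj hlt
    _ ≤ ∑ j ∈ s, P {ω | x < X j ω} := measure_biUnion_finset_le s _

namespace ProbabilityTheory

lemma IndepFun.measure_setOf_mem_eq_lintegral {α β : Type*} [IsFiniteMeasure P]
    [MeasurableSpace α] [Countable α] [MeasurableSingletonClass α] [MeasurableSpace β]
    {W : Ω → α} {Z : Ω → β} (hW : Measurable W) (hZ : Measurable Z) (hWZ : IndepFun W Z P)
    {S : α → Set β} (hS : ∀ a, MeasurableSet (S a)) :
    P {ω | Z ω ∈ S (W ω)} = ∫⁻ a, P (Z ⁻¹' S a) ∂P.map W := by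
  have hT : MeasurableSet {p : α × β | p.2 ∈ S p.1} :=
    measurableSet_setOfPred.2 (measurable_from_prod_countable_right fun a =>
      measurableSet_setOfPred.1 (hS a))
  calc P {ω | Z ω ∈ S (W ω)} = P.map (fun ω => (W ω, Z ω)) {p | p.2 ∈ S p.1} :=
        (Measure.map_apply (hW.prodMk hZ) hT).symm
    _ = (P.map W).prod (P.map Z) {p | p.2 ∈ S p.1} := by
        rw [hWZ.map_prod_eq_prod_map_map hW.aemeasurable hZ.aemeasurable]
    _ = ∫⁻ a, P.map Z (S a) ∂P.map W := Measure.prod_apply hT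
    _ = ∫⁻ a, P (Z ⁻¹' S a) ∂P.map W := by simp_rw [Measure.map_apply hZ (hS _)]

lemma iIndepFun.indepFun_of_measurable_iSup {ι β γ δ : Type*} [MeasurableSpace β]
    [MeasurableSpace γ] [MeasurableSpace δ] {X : ι → Ω → β} (hX : iIndepFun X P)
    (hXm : ∀ i, Measurable (X i)) {S T : Set ι} (hST : Disjoint S T) {U : Ω → γ} {V : Ω → δ}
    (hU : Measurable[⨆ i ∈ S, MeasurableSpace.comap (X i) inferInstance] U)
    (hV : Measurable[⨆ i ∈ T, MeasurableSpace.comap (X i) inferInstance] V) :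
    IndepFun U V P := by
  rw [IndepFun_iff_Indep]
  exact indep_of_indep_of_le_right (indep_of_indep_of_le_left
    (indep_iSup_of_disjoint (fun i => (hXm i).comap_le) hX.iIndep hST) hU.comap_le) hV.comap_le

lemma iIndepFun.map_comp_eq_pi [IsProbabilityMeasure P] {ι κ β : Type*} [Fintype κ]
    [MeasurableSpace β] {X : ι → Ω → β} (hX : iIndepFun X P) (hXm : ∀ i, Measurable (X i))
    {g : κ → ι} (hg : g.Injective) {μ : Measure β} (hlaw : ∀ k, P.map (X (g k)) = μ) :
    P.map (fun ω k => X (g k) ω) = Measure.pi fun _ => μ := by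
  rw [(hX.precomp hg).map_fun_eq_pi_map fun k => (hXm (g k)).aemeasurable]
  simp only [hlaw]

end ProbabilityTheory

section BranchingIncrements

variable [IsProbabilityMeasure P] {B : ℕ → ℕ → Ω → ℕ} (hBm : ∀ n i, Measurable (B n i))
  (hBindep : iIndepFun (fun p : ℕ × ℕ => B p.1 p.2) P) {ν : ℕ → Measure ℕ}
  (hBd : ∀ n i, P.map (B n i) = ν n)
include hBm hBindep hBd

lemma measure_sum_shift_mem (n o c : ℕ) (s : Set ℕ) :
    P {ω | ∑ i ∈ range c, B n (o + i) ω ∈ s} = P {ω | ∑ i ∈ range c, B n i ω ∈ s} := by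
  have hlaw (o : ℕ) : P {ω | ∑ i ∈ range c, B n (o + i) ω ∈ s}
      = Measure.pi (fun _ : Fin c => ν n) {v | ∑ i, v i ∈ s} := by
    rw [← hBindep.map_comp_eq_pi (fun p => hBm p.1 p.2) (g := fun i : Fin c => (n, o + i))
      (fun i i' h => Fin.ext (by simpa using h)) fun i => hBd n _,
      Measure.map_apply (measurable_pi_lambda _ fun i => hBm _ _) .of_discrete]
    refine congrArg P (Set.ext fun ω => ?_)
    rw [Set.mem_preimage, Set.mem_ofPred_eq, Set.mem_ofPred_eq,
      Fin.sum_univ_eq_sum_range (fun i => B n (o + i) ω)]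
  simpa using (hlaw o).trans (hlaw 0).symm

omit [IsProbabilityMeasure P] hBd in
lemma indepFun_blockCopies_row (n j : ℕ) :
    IndepFun (fun ω => (∑ k ∈ range j, blockCopies (B · · ω) n k, blockCopies (B · · ω) n j))
      (fun ω i => B n i ω) P := by
  let X : ℕ × ℕ → Ω → ℕ := fun p => B p.1 p.2
  have hX {S : Set (ℕ × ℕ)} {p : ℕ × ℕ} (hp : p ∈ S) :
      Measurable[⨆ q ∈ S, MeasurableSpace.comap (X q) inferInstance] (X p) :=
    measurable_iff_comap_le.2 (le_iSup₂ (f := fun q (_ : q ∈ S) =>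
      MeasurableSpace.comap (X q) inferInstance) p hp)
  refine hBindep.indepFun_of_measurable_iSup (fun p => hBm p.1 p.2)
    (S := {q | q.1 < n}) (T := {q | q.1 = n})
    (Set.disjoint_left.2 fun q hlt heq => hlt.ne heq) ?_ ?_
  · have hpast := measurable_blockCopies (mΩ := ⨆ q ∈ {q : ℕ × ℕ | q.1 < n},
      MeasurableSpace.comap (X q) inferInstance) (B := B) (n := n)
      fun m hm i => hX (p := (m, i)) hm
    exact (Finset.measurable_sum _ fun k _ => hpast k).prodMk (hpast j)
  · exact @measurable_pi_lambda _ _ _ (⨆ q ∈ {q : ℕ × ℕ | q.1 = n},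
      MeasurableSpace.comap (X q) inferInstance) _ _ fun i => hX (p := (n, i)) rfl

lemma measure_blockCopies_succ_mem (n j : ℕ) (s : Set ℕ) :
    P {ω | blockCopies (B · · ω) (n + 1) j ∈ s}
      = ∫⁻ c, P {ω | max (∑ i ∈ range c, B n i ω) 1 ∈ s}
          ∂P.map fun ω => blockCopies (B · · ω) n j := by
  have hcopies := measurable_blockCopies (B := B) (n := n) fun m _ i => hBm m i
  set W : Ω → ℕ × ℕ := fun ω =>
    (∑ k ∈ range j, blockCopies (B · · ω) n k, blockCopies (B · · ω) n j)
  have hW : Measurable W := (Finset.measurable_sum _ fun k _ => hcopies k).prodMk (hcopies j)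
  refine ((indepFun_blockCopies_row hBm hBindep n j).measure_setOf_mem_eq_lintegral hW
      (measurable_pi_lambda _ fun i => hBm n i)
      (S := fun p => {z | max (∑ i ∈ range p.2, z (p.1 + i)) 1 ∈ s})
      fun p => ((Finset.measurable_sum (range p.2) fun i _ => measurable_pi_apply (p.1 + i)).max
        measurable_const) (.of_discrete (s := s))).trans ?_
  rw [show P.map (fun ω => blockCopies (B · · ω) n j) = (P.map W).map Prod.snd from
    (Measure.map_map measurable_snd hW).symm, lintegral_map .of_discrete measurable_snd]
  refine lintegral_congr fun p => ?_
  exact measure_sum_shift_mem hBm hBindep hBd n p.1 p.2 {x | max x 1 ∈ s}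

lemma identDistrib_blockCopies (n j : ℕ) :
    IdentDistrib (fun ω => blockCopies (B · · ω) n j) (fun ω => blockCopies (B · · ω) n 0)
      P P := by
  have hcopies (n : ℕ) := measurable_blockCopies (B := B) (n := n) fun m _ i => hBm m i
  refine ⟨(hcopies n j).aemeasurable, (hcopies n 0).aemeasurable, ?_⟩
  induction n with
  | zero => rfl
  | succ n ih =>
    ext s hs
    have h0 := measure_blockCopies_succ_mem hBm hBindep hBd n 0 s
    rw [← ih] at h0
    rw [Measure.map_apply (hcopies _ j) hs, Measure.map_apply (hcopies _ 0) hs]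
    exact (measure_blockCopies_succ_mem hBm hBindep hBd n j s).trans h0.symm

end BranchingIncrements

end Probability

theorem stmt17_general {Ω : Type*} [MeasurableSpace Ω] (P : Measure Ω) [IsProbabilityMeasure P]
    (B : ℕ → ℕ → Ω → ℕ) (hBm : ∀ n i, Measurable (B n i))
    (hBindep : iIndepFun (fun p : ℕ × ℕ => B p.1 p.2) P)
    (ν : ℕ → Measure ℕ) (hBd : ∀ n i, Measure.map (B n i) P = ν n)
    (y l : ℕ) (hl : 1 ≤ l)
    (Λy Λl : ℕ → Ω → ℕ) (h0y : ∀ ω, Λy 0 ω = y) (h0l : ∀ ω, Λl 0 ω = l)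
    (hrecy : ∀ (n : ℕ) ω, Λy (n + 1) ω = max (∑ i ∈ Finset.range (Λy n ω), B n i ω) y)
    (hrecl : ∀ (n : ℕ) ω, Λl (n + 1) ω = max (∑ i ∈ Finset.range (Λl n ω), B n i ω) l) :
    ∀ (n : ℕ) (x : ℝ),
      P {ω | (y : ℝ) * x < (Λy n ω : ℝ)} / (y : ENNReal) ≤ P {ω | x < (Λl n ω : ℝ)} := by
  intro n x
  have hy_le (ω : Ω) : (Λy n ω : ℝ) ≤ ∑ j ∈ range y, (blockCopies (B · · ω) n j : ℝ) := by
    rw [eq_reflected_of_recursion h0y hrecy]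
    exact_mod_cast reflected_le_sum_blockCopies _ y n
  have hl_ge (ω : Ω) : blockCopies (B · · ω) n 0 ≤ Λl n ω := by
    rw [eq_reflected_of_recursion h0l hrecl, blockCopies_zero_eq_reflected]
    exact reflected_mono _ hl n
  refine ENNReal.div_le_of_le_mul ?_
  calc P {ω | (y : ℝ) * x < Λy n ω}
      ≤ P {ω | #(range y) * x < ∑ j ∈ range y, (blockCopies (B · · ω) n j : ℝ)} :=
        measure_mono fun ω hω => by simpa using hω.trans_le (hy_le ω)
    _ ≤ ∑ j ∈ range y, P {ω | x < blockCopies (B · · ω) n j} :=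
        measure_card_mul_lt_sum_le _ _ x
    _ = ∑ j ∈ range y, P {ω | x < blockCopies (B · · ω) n 0} :=
        sum_congr rfl fun j _ =>
          (identDistrib_blockCopies hBm hBindep hBd n j).measure_mem_eq (s := {m | x < m})
            .of_discrete
    _ ≤ ∑ j ∈ range y, P {ω | x < Λl n ω} :=
        sum_le_sum fun j _ => measure_mono fun ω hω =>
          lt_of_lt_of_le (α := ℝ) hω (by exact_mod_cast hl_ge ω)
    _ = P {ω | x < Λl n ω} * y := by simp [mul_comm]

theorem stmt17 {Ω : Type*} [MeasurableSpace Ω] (P : Measure Ω) [IsProbabilityMeasure P]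
    (B : ℕ → ℕ → Ω → ℕ) (hBm : ∀ n i, Measurable (B n i))
    (hBindep : iIndepFun (fun p : ℕ × ℕ => B p.1 p.2) P)
    (ν : ℕ → Measure ℕ) (hBd : ∀ n i, Measure.map (B n i) P = ν n)
    (y l : ℕ) (hy : 1 ≤ y) (hl : 1 ≤ l)
    (Λy Λl : ℕ → Ω → ℕ) (h0y : ∀ ω, Λy 0 ω = y) (h0l : ∀ ω, Λl 0 ω = l)
    (hrecy : ∀ (n : ℕ) ω, Λy (n + 1) ω = max (∑ i ∈ Finset.range (Λy n ω), B n i ω) y)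
    (hrecl : ∀ (n : ℕ) ω, Λl (n + 1) ω = max (∑ i ∈ Finset.range (Λl n ω), B n i ω) l) :
    ∀ (n : ℕ) (x : ℝ),
      P {ω | (y : ℝ) * x < (Λy n ω : ℝ)} / (y : ENNReal) ≤ P {ω | x < (Λl n ω : ℝ)} :=
  stmt17_general P B hBm hBindep ν hBd y l hl Λy Λl h0y h0l hrecy hrecl
end
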